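/- Let (T_t)_{t≥0} be a uniformly continuous semigroup of sublinear transition operators on ℬ, and let Q := ln T₁ be the limit in operator seminorm of the sequence (n(T_{1/n} − I))_{n∈ℕ}. Then Q is a bounded sublinear rate operator, and for every t ≥ 0 the sequence ((I + (t/n)Q)^n)_{n∈ℕ} converges in operator seminorm to T_t; that is, T_t = e^{t·ln T₁} for all t ≥ 0. -/

import Mathlib

/-!
The operators `n (T (1/n) - I)` satisfy the axioms of a sublinear rate operator, and these axioms
pass to pointwise limits, so `Q` is one; being sublinear with `‖Q‖ = L < ∞`, it is `L`-Lipschitz.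
Writing `h = r + k/m` with `k = ⌊h m⌋` gives `T h = T r ∘ (T (1/m))^[k]`; the one-step errors
`T (1/m) - I - Q/m = o(1/m)` accumulate over `k` steps to at most `L² h² + o(1)`, and
`T r → I` uniformly as `r → 0`, so `‖T h - I - h Q‖ ≤ L² h²`. Finally `I + (t/n) Q` is
`(1 + t L / n)`-Lipschitz and `T (t/n)` is nonexpansive, so telescoping
`(I + (t/n) Q)^n - (T (t/n))^n` bounds the Euler error by
`n (1 + t L/n)^n L² (t/n)² ≤ e^{tL} L² t² / n`.
-/

open Filter Topology BoundedContinuousFunction ENNReal NNReal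

/-- The space of (possibly nonlinear) operators on the Banach space `X →ᵇ ℝ`
of bounded (continuous, i.e. with `X` discrete: all) real-valued functions. -/
abbrev Op (X : Type*) [TopologicalSpace X] :=
  BoundedContinuousFunction X ℝ → BoundedContinuousFunction X ℝ

/-- The operator seminorm `‖A‖ = sup {‖A f‖/‖f‖ : f ≠ 0}`, a value in `[0,∞]`. -/
noncomputable def opSemiNorm {X : Type*} [TopologicalSpace X] (A : Op X) : ℝ≥0∞ :=
  ⨆ (f : BoundedContinuousFunction X ℝ) (_ : f ≠ 0), (‖A f‖₊ : ℝ≥0∞) / (‖f‖₊ : ℝ≥0∞)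

/-- The operator norm distance `d(A,B) = ‖A 0 − B 0‖∞ + ‖A − B‖`. -/
noncomputable def opDist {X : Type*} [TopologicalSpace X] (A B : Op X) : ℝ≥0∞ :=
  (‖A 0 - B 0‖₊ : ℝ≥0∞) + opSemiNorm (A - B)

/-- Sublinear transition operator: (T1) positive homogeneity, (T2) subadditivity,
(T3) `T f ≤ sup f` pointwise. -/
def IsSublinearTransition {X : Type*} [TopologicalSpace X] (T : Op X) : Prop :=
  (∀ (c : ℝ), 0 ≤ c → ∀ f, T (c • f) = c • T f) ∧
  (∀ f g, ∀ x, T (f + g) x ≤ T f x + T g x) ∧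
  (∀ f, ∀ x, T f x ≤ ⨆ y, f y)

/-- Sublinear rate operator: (Q1) positive homogeneity, (Q2) subadditivity,
(Q3) constants map to zero, (Q4) positive maximum principle. -/
def IsSublinearRate {X : Type*} [TopologicalSpace X] (Q : Op X) : Prop :=
  (∀ (c : ℝ), 0 ≤ c → ∀ f, Q (c • f) = c • Q f) ∧
  (∀ f g, ∀ x, Q (f + g) x ≤ Q f x + Q g x) ∧
  (∀ (c : ℝ), Q (BoundedContinuousFunction.const X c) = 0) ∧
  (∀ f, ∀ x : X, (⨆ y, f y) = f x → 0 ≤ f x → Q f x ≤ 0)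

/-- The Euler approximation `(I + (t/n) Q)^n` (n-fold composition). -/
noncomputable def euler {X : Type*} [TopologicalSpace X] (Q : Op X) (t : ℝ) (n : ℕ) : Op X :=
  (fun f => f + (t / (n : ℝ)) • Q f)^[n]

/-- Uniform continuity of a semigroup `(S_t)_{t ≥ 0}`:
`‖S_s − S_t‖ → 0` as `s → t` (within `s ≥ 0`), for every `t ≥ 0`. -/
def IsUniformlyContinuousSG {X : Type*} [TopologicalSpace X] (S : ℝ → Op X) : Prop :=
  ∀ t : ℝ, 0 ≤ t →
    Tendsto (fun s => opSemiNorm (S s - S t)) (nhdsWithin t (Set.Ici 0)) (nhds 0)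

/-- The indicator function `1_x` of the singleton `{x}`. -/
noncomputable def indic {X : Type*} [TopologicalSpace X] [DiscreteTopology X] (x : X) :
    BoundedContinuousFunction X ℝ :=
  BoundedContinuousFunction.ofNormedAddCommGroup
    (Set.indicator {x} (fun _ => (1 : ℝ))) continuous_of_discreteTopology 1
    (by
      intro y
      classical
      rw [Set.indicator_apply]
      split_ifs <;> simp)

/-- Downward continuity (continuity from above) of an operator. -/
def DownwardContinuous {X : Type*} [TopologicalSpace X] (A : Op X) : Prop :=
  ∀ (f : ℕ → BoundedContinuousFunction X ℝ) (g : BoundedContinuousFunction X ℝ),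
    (∀ n x, f (n + 1) x ≤ f n x) →
    (∀ x, Tendsto (fun n => f n x) atTop (nhds (g x))) →
    ∀ x, Tendsto (fun n => A (f n) x) atTop (nhds (A g x))

section OpSemiNorm

variable {X : Type*} [TopologicalSpace X]

lemma enorm_apply_le_opSemiNorm_mul (A : Op X) {f : X →ᵇ ℝ} (hf : f ≠ 0) :
    ‖A f‖ₑ ≤ opSemiNorm A * ‖f‖ₑ := by
  have h : ‖A f‖ₑ / ‖f‖ₑ ≤ opSemiNorm A :=
    le_iSup₂ (f := fun (g : X →ᵇ ℝ) (_ : g ≠ 0) => (‖A g‖₊ : ℝ≥0∞) / ‖g‖₊) f hf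
  exact (ENNReal.div_le_iff_le_mul (Or.inl (by simpa using hf)) (Or.inl ENNReal.coe_ne_top)).mp h

lemma norm_apply_le_toReal_mul {A : Op X} (hA : opSemiNorm A ≠ ⊤) (h0 : A 0 = 0)
    (f : X →ᵇ ℝ) : ‖A f‖ ≤ (opSemiNorm A).toReal * ‖f‖ := by
  rcases eq_or_ne f 0 with rfl | hf
  · simp [h0]
  rw [← toReal_enorm, ← toReal_enorm, ← ENNReal.toReal_mul]
  exact ENNReal.toReal_mono (mul_ne_top hA ENNReal.coe_ne_top) (enorm_apply_le_opSemiNorm_mul A hf)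

lemma opSemiNorm_le_ofReal {A : Op X} {c : ℝ} (h : ∀ f, ‖A f‖ ≤ c * ‖f‖) :
    opSemiNorm A ≤ ENNReal.ofReal c := by
  refine iSup₂_le fun f hf => ?_
  rw [ENNReal.div_le_iff_le_mul (Or.inl (by simpa using hf)) (Or.inl ENNReal.coe_ne_top),
    ← enorm_eq_nnnorm, ← enorm_eq_nnnorm, ← ofReal_norm, ← ofReal_norm,
    ← ENNReal.ofReal_mul' (norm_nonneg f)]
  exact ENNReal.ofReal_le_ofReal (h f)

lemma opSemiNorm_le_add_opSemiNorm_sub (A B : Op X) :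
    opSemiNorm B ≤ opSemiNorm A + opSemiNorm (A - B) := by
  refine iSup₂_le fun f hf => ?_
  calc ‖B f‖ₑ / ‖f‖ₑ ≤ (‖A f‖ₑ + ‖(A - B) f‖ₑ) / ‖f‖ₑ := by
        gcongr
        simpa using enorm_sub_le (a := A f) (b := A f - B f)
    _ = ‖A f‖ₑ / ‖f‖ₑ + ‖(A - B) f‖ₑ / ‖f‖ₑ := ENNReal.add_div
    _ ≤ opSemiNorm A + opSemiNorm (A - B) :=
      add_le_add (le_iSup₂ (f := fun (g : X →ᵇ ℝ) (_ : g ≠ 0) => (‖A g‖₊ : ℝ≥0∞) / ‖g‖₊) f hf)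
        (le_iSup₂ (f := fun (g : X →ᵇ ℝ) (_ : g ≠ 0) => (‖(A - B) g‖₊ : ℝ≥0∞) / ‖g‖₊) f hf)

variable {ι : Type*} {l : Filter ι}

lemma tendsto_apply_of_tendsto_opDist {A : ι → Op X} {B : Op X}
    (h : Tendsto (fun i => opDist (A i) B) l (𝓝 0)) (f : X →ᵇ ℝ) :
    Tendsto (fun i => A i f) l (𝓝 (B f)) := by
  rw [tendsto_iff_edist_tendsto_0]
  rcases eq_or_ne f 0 with rfl | hf
  · refine tendsto_of_tendsto_of_tendsto_of_le_of_le tendsto_const_nhds h (fun _ => zero_le)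
      fun i => ?_
    rw [edist_eq_enorm_sub]
    exact le_self_add
  · have h' := ENNReal.Tendsto.mul_const h (Or.inr ENNReal.coe_ne_top) (b := ‖f‖ₑ)
    rw [zero_mul] at h'
    refine tendsto_of_tendsto_of_tendsto_of_le_of_le tendsto_const_nhds h' (fun _ => zero_le)
      fun i => ?_
    rw [edist_eq_enorm_sub]
    calc ‖A i f - B f‖ₑ ≤ opSemiNorm (A i - B) * ‖f‖ₑ := enorm_apply_le_opSemiNorm_mul _ hf
      _ ≤ opDist (A i) B * ‖f‖ₑ := by gcongr; exact le_add_self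

lemma tendsto_opSemiNorm_sub_of_tendsto_opDist {A : ι → Op X} {B : Op X}
    (h : Tendsto (fun i => opDist (A i) B) l (𝓝 0)) :
    Tendsto (fun i => opSemiNorm (A i - B)) l (𝓝 0) :=
  tendsto_of_tendsto_of_tendsto_of_le_of_le tendsto_const_nhds h (fun _ => zero_le)
    fun _ => le_add_self

lemma opSemiNorm_ne_top_of_tendsto_opDist [l.NeBot] {A : ι → Op X} {B : Op X}
    (hA : ∀ i, opSemiNorm (A i) ≠ ⊤) (h : Tendsto (fun i => opDist (A i) B) l (𝓝 0)) :
    opSemiNorm B ≠ ⊤ := by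
  obtain ⟨i, hi⟩ := (tendsto_opSemiNorm_sub_of_tendsto_opDist h).eventually
    (gt_mem_nhds zero_lt_top) |>.exists
  exact ne_top_of_le_ne_top (add_ne_top.mpr ⟨hA i, hi.ne⟩) (opSemiNorm_le_add_opSemiNorm_sub _ _)

lemma exists_bound_of_tendsto_opSemiNorm {B : ι → Op X}
    (h : Tendsto (fun i => opSemiNorm (B i)) l (𝓝 0)) (h0 : ∀ᶠ i in l, B i 0 = 0) :
    ∃ ε : ι → ℝ, (∀ i, 0 ≤ ε i) ∧ Tendsto ε l (𝓝 0) ∧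
      ∀ᶠ i in l, ∀ f, ‖B i f‖ ≤ ε i * ‖f‖ := by
  refine ⟨fun i => (opSemiNorm (B i)).toReal, fun _ => toReal_nonneg, ?_, ?_⟩
  · have h' := (ENNReal.tendsto_toReal zero_ne_top).comp h
    rwa [ENNReal.toReal_zero] at h'
  · filter_upwards [h.eventually (gt_mem_nhds zero_lt_top), h0] with i hi hi0
    exact norm_apply_le_toReal_mul hi.ne hi0

lemma tendsto_opSemiNorm_of_bound {A : ι → Op X} {ε : ι → ℝ} (hε : Tendsto ε l (𝓝 0))
    (h : ∀ᶠ i in l, ∀ f, ‖A i f‖ ≤ ε i * ‖f‖) :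
    Tendsto (fun i => opSemiNorm (A i)) l (𝓝 0) := by
  have hε' : Tendsto (fun i => ENNReal.ofReal (ε i)) l (𝓝 0) := by
    simpa using ENNReal.tendsto_ofReal hε
  exact tendsto_of_tendsto_of_tendsto_of_le_of_le' tendsto_const_nhds hε'
    (Eventually.of_forall fun _ => zero_le) (h.mono fun _ hi => opSemiNorm_le_ofReal hi)

end OpSemiNorm

section SublinearOperators

variable {X : Type*} [TopologicalSpace X]

lemma iSup_apply_le_norm (f : X →ᵇ ℝ) : ⨆ y, f y ≤ ‖f‖ :=
  Real.iSup_le (fun y => (le_abs_self _).trans (f.norm_coe_le_norm y)) (norm_nonneg f)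

lemma norm_sub_le_of_subadditive {A : Op X} {L : ℝ} (hL : 0 ≤ L)
    (hadd : ∀ f g x, A (f + g) x ≤ A f x + A g x) (hbd : ∀ f x, A f x ≤ L * ‖f‖)
    (f g : X →ᵇ ℝ) : ‖A f - A g‖ ≤ L * ‖f - g‖ := by
  have key : ∀ u v x, A u x - A v x ≤ L * ‖u - v‖ := fun u v x => by
    have := hadd v (u - v) x
    rw [add_sub_cancel] at this
    linarith [hbd (u - v) x]
  rw [BoundedContinuousFunction.norm_le (by positivity)]
  intro x
  rw [BoundedContinuousFunction.sub_apply, Real.norm_eq_abs, abs_le]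
  constructor
  · have := key g f x
    rw [norm_sub_rev] at this
    linarith
  · exact key f g x

namespace IsSublinearTransition

variable {T : Op X} (hT : IsSublinearTransition T)
include hT

lemma map_zero : T 0 = 0 := by
  simpa using hT.1 0 le_rfl 0

lemma map_const (c : ℝ) : T (const X c) = const X c := by
  ext x
  have hsup : ∀ a : ℝ, T (const X a) x ≤ a := fun a => by
    have : Nonempty X := ⟨x⟩
    simpa using hT.2.2 (const X a) x
  have hsum := hT.2.1 (const X c) (const X (-c)) x
  rw [show const X c + const X (-c) = 0 by ext; simp, hT.map_zero] at hsum
  have := hsup (-c)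
  simp only [BoundedContinuousFunction.coe_zero, Pi.zero_apply] at hsum
  simpa using le_antisymm (hsup c) (by linarith)

lemma norm_map_sub_map_le (f g : X →ᵇ ℝ) : ‖T f - T g‖ ≤ ‖f - g‖ := by
  simpa using norm_sub_le_of_subadditive zero_le_one hT.2.1
    (fun f x => by simpa using (hT.2.2 f x).trans (iSup_apply_le_norm f)) f g

lemma norm_map_le (f : X →ᵇ ℝ) : ‖T f‖ ≤ ‖f‖ := by
  simpa [hT.map_zero] using hT.norm_map_sub_map_le f 0

lemma isSublinearRate_smul_sub_id {c : ℝ} (hc : 0 ≤ c) : IsSublinearRate (c • (T - id)) := by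
  refine ⟨fun a ha f => ?_, fun f g x => ?_, fun a => ?_, fun f x hmax _ => ?_⟩
  · simp only [Pi.smul_apply, Pi.sub_apply, id, hT.1 a ha, smul_sub, smul_comm c a]
  · simp only [Pi.smul_apply, Pi.sub_apply, id, BoundedContinuousFunction.smul_apply,
      BoundedContinuousFunction.sub_apply, BoundedContinuousFunction.add_apply, smul_eq_mul]
    nlinarith [hT.2.1 f g x]
  · simp [hT.map_const]
  · have := hT.2.2 f x
    rw [hmax] at this
    simp only [Pi.smul_apply, Pi.sub_apply, id, BoundedContinuousFunction.smul_apply,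
      BoundedContinuousFunction.sub_apply, smul_eq_mul]
    nlinarith

lemma opSemiNorm_smul_sub_id_ne_top (c : ℝ) : opSemiNorm (c • (T - id)) ≠ ⊤ := by
  refine ne_top_of_le_ne_top ofReal_ne_top (opSemiNorm_le_ofReal (c := |c| * 2) fun f => ?_)
  calc ‖c • (T f - f)‖ = |c| * ‖T f - f‖ := by rw [norm_smul, Real.norm_eq_abs]
    _ ≤ |c| * (2 * ‖f‖) := by
      gcongr
      linarith [norm_sub_le (T f) f, hT.norm_map_le f]
    _ = |c| * 2 * ‖f‖ := by ring

end IsSublinearTransition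

namespace IsSublinearRate

lemma of_tendsto {ι : Type*} {l : Filter ι} [l.NeBot] {A : ι → Op X} {Q : Op X}
    (hA : ∀ i, IsSublinearRate (A i)) (hlim : ∀ f, Tendsto (fun i => A i f) l (𝓝 (Q f))) :
    IsSublinearRate Q := by
  have hlim' : ∀ f x, Tendsto (fun i => A i f x) l (𝓝 (Q f x)) := fun f x =>
    ((continuous_eval_const x).tendsto _).comp (hlim f)
  refine ⟨fun c hc f => ?_, fun f g x => ?_, fun c => ?_, fun f x hmax hpos => ?_⟩
  · refine tendsto_nhds_unique (hlim (c • f)) ?_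
    simp_rw [(hA _).1 c hc f]
    exact (hlim f).const_smul c
  · exact le_of_tendsto_of_tendsto' (hlim' (f + g) x) ((hlim' f x).add (hlim' g x))
      fun i => (hA i).2.1 f g x
  · refine tendsto_nhds_unique (hlim _) ?_
    simp_rw [(hA _).2.2.1 c]
    exact tendsto_const_nhds
  · exact le_of_tendsto' (hlim' f x) fun i => (hA i).2.2.2 f x hmax hpos

variable {Q : Op X} (hQ : IsSublinearRate Q)
include hQ

lemma map_zero : Q 0 = 0 := by
  simpa [show const X (0 : ℝ) = 0 by ext; simp] using hQ.2.2.1 0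

lemma norm_map_sub_map_le {L : ℝ} (hL : 0 ≤ L) (hbd : ∀ f, ‖Q f‖ ≤ L * ‖f‖) (f g : X →ᵇ ℝ) :
    ‖Q f - Q g‖ ≤ L * ‖f - g‖ :=
  norm_sub_le_of_subadditive hL hQ.2.1
    (fun f x => (le_abs_self _).trans (((Q f).norm_coe_le_norm x).trans (hbd f))) f g

end IsSublinearRate

end SublinearOperators

section Iterates

variable {E : Type*} [SeminormedAddCommGroup E]

lemma norm_iterate_le {S : E → E} (hS : ∀ f, ‖S f‖ ≤ ‖f‖) (k : ℕ) (f : E) :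
    ‖S^[k] f‖ ≤ ‖f‖ := by
  induction k with
  | zero => simp
  | succ k ih => rw [Function.iterate_succ_apply']; exact (hS _).trans ih

lemma norm_iterate_sub_le {S : E → E} {d : ℝ} (hS : ∀ f, ‖S f‖ ≤ ‖f‖) (hd0 : 0 ≤ d)
    (hd : ∀ g, ‖S g - g‖ ≤ d * ‖g‖) (k : ℕ) (f : E) : ‖S^[k] f - f‖ ≤ k * d * ‖f‖ := by
  induction k with
  | zero => simp
  | succ k ih =>
    rw [Function.iterate_succ_apply']
    calc ‖S (S^[k] f) - f‖ ≤ ‖S (S^[k] f) - S^[k] f‖ + ‖S^[k] f - f‖ :=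
          norm_sub_le_norm_sub_add_norm_sub _ _ _
      _ ≤ d * ‖f‖ + k * d * ‖f‖ :=
        add_le_add ((hd _).trans (by gcongr; exact norm_iterate_le hS k f)) ih
      _ = (k + 1 : ℕ) * d * ‖f‖ := by push_cast; ring

lemma norm_iterate_sub_iterate_le {R S : E → E} {l ψ : ℝ} (hS : ∀ f, ‖S f‖ ≤ ‖f‖)
    (hR : ∀ f g, ‖R f - R g‖ ≤ l * ‖f - g‖) (hl : 1 ≤ l)
    (hψ : ∀ g, ‖R g - S g‖ ≤ ψ * ‖g‖) (hψ0 : 0 ≤ ψ) (k : ℕ) (f : E) :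
    ‖R^[k] f - S^[k] f‖ ≤ k * l ^ k * ψ * ‖f‖ := by
  induction k with
  | zero => simp
  | succ k ih =>
    rw [Function.iterate_succ_apply', Function.iterate_succ_apply']
    have hlk : ψ * ‖f‖ ≤ l ^ (k + 1) * ψ * ‖f‖ := by
      have := one_le_pow₀ hl (n := k + 1)
      have := mul_nonneg hψ0 (norm_nonneg f)
      nlinarith
    calc ‖R (R^[k] f) - S (S^[k] f)‖
        ≤ ‖R (R^[k] f) - R (S^[k] f)‖ + ‖R (S^[k] f) - S (S^[k] f)‖ :=
          norm_sub_le_norm_sub_add_norm_sub _ _ _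
      _ ≤ l * (k * l ^ k * ψ * ‖f‖) + ψ * ‖f‖ := by
          gcongr
          · exact (hR _ _).trans (by gcongr)
          · exact (hψ _).trans (by gcongr; exact norm_iterate_le hS k f)
      _ ≤ (k + 1 : ℕ) * l ^ (k + 1) * ψ * ‖f‖ := by
          rw [pow_succ] at hlk ⊢; push_cast; linarith

variable [NormedSpace ℝ E]

lemma norm_iterate_sub_sub_smul_le {S Q : E → E} {τ L ε : ℝ} (hS : ∀ f, ‖S f‖ ≤ ‖f‖)
    (hQlip : ∀ f g, ‖Q f - Q g‖ ≤ L * ‖f - g‖) (hQ : ∀ f, ‖Q f‖ ≤ L * ‖f‖)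
    (hstep : ∀ g, ‖S g - g - τ • Q g‖ ≤ ε * τ * ‖g‖) (hτ : 0 ≤ τ) (hL : 0 ≤ L) (hε : 0 ≤ ε)
    (k : ℕ) (f : E) :
    ‖S^[k] f - f - (k * τ) • Q f‖ ≤ (k * τ * ε + L * (ε + L) * (k * τ) ^ 2) * ‖f‖ := by
  have hd : ∀ g, ‖S g - g‖ ≤ (ε + L) * τ * ‖g‖ := fun g => by
    calc ‖S g - g‖ = ‖(S g - g - τ • Q g) + τ • Q g‖ := by rw [sub_add_cancel]
      _ ≤ ε * τ * ‖g‖ + τ * (L * ‖g‖) := by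
        refine (norm_add_le _ _).trans (add_le_add (hstep g) ?_)
        rw [norm_smul, Real.norm_of_nonneg hτ]
        gcongr
        exact hQ g
      _ = (ε + L) * τ * ‖g‖ := by ring
  induction k with
  | zero => simp
  | succ k ih =>
    rw [Function.iterate_succ_apply']
    set g := S^[k] f
    have hgf : ‖g - f‖ ≤ k * ((ε + L) * τ) * ‖f‖ := norm_iterate_sub_le hS (by positivity) hd k f
    have hgap : 0 ≤ L * (ε + L) * τ ^ 2 * (k + 1) * ‖f‖ := by positivity
    calc ‖S g - f - ((k + 1 : ℕ) * τ) • Q f‖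
        = ‖(S g - g - τ • Q g) + (g - f - (k * τ) • Q f) + τ • (Q g - Q f)‖ := by
          congr 1; push_cast; rw [add_mul, one_mul, add_smul, smul_sub]; abel
      _ ≤ ‖S g - g - τ • Q g‖ + ‖g - f - (k * τ) • Q f‖ + ‖τ • (Q g - Q f)‖ := norm_add₃_le
      _ ≤ ε * τ * ‖f‖ + (k * τ * ε + L * (ε + L) * (k * τ) ^ 2) * ‖f‖
            + τ * (L * (k * ((ε + L) * τ) * ‖f‖)) := by
          rw [norm_smul, Real.norm_of_nonneg hτ]
          gcongr
          · exact (hstep g).trans (by gcongr; exact norm_iterate_le hS k f)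
          · exact (hQlip g f).trans (by gcongr)
      _ ≤ ((k + 1 : ℕ) * τ * ε + L * (ε + L) * ((k + 1 : ℕ) * τ) ^ 2) * ‖f‖ := by
          push_cast; nlinarith [hgap]

end Iterates

section Semigroup

lemma semigroup_mul_eq_iterate {α : Type*} {T : ℝ → α → α} (hT0 : T 0 = id)
    (hsg : ∀ s t, 0 ≤ s → 0 ≤ t → T (s + t) = T s ∘ T t) {τ : ℝ} (hτ : 0 ≤ τ) (k : ℕ) :
    T (k * τ) = (T τ)^[k] := by
  induction k with
  | zero => simpa using hT0
  | succ k ih =>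
    rw [Nat.cast_succ, add_mul, one_mul, add_comm, hsg τ _ hτ (by positivity), ih,
      Function.iterate_succ']

lemma sub_floor_mul_mem_Icc {h : ℝ} (hh : 0 ≤ h) {m : ℕ} (hm : 0 < m) :
    0 ≤ h - ⌊h * m⌋₊ * (1 / m) ∧ h - ⌊h * m⌋₊ * (1 / m) ≤ 1 / m := by
  have hm' : (0 : ℝ) < m := Nat.cast_pos.mpr hm
  have hle := Nat.floor_le (mul_nonneg hh hm'.le)
  have hlt := Nat.lt_floor_add_one (h * m)
  rw [mul_one_div, sub_nonneg, div_le_iff₀ hm', sub_le_iff_le_add, ← add_div, le_div_iff₀ hm']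
  constructor <;> linarith

variable {E : Type*} [SeminormedAddCommGroup E] [NormedSpace ℝ E] {T : ℝ → E → E} {Q : E → E}
  {L : ℝ}

lemma norm_semigroup_add_mul_sub_le (hT0 : T 0 = id)
    (hsg : ∀ s t, 0 ≤ s → 0 ≤ t → T (s + t) = T s ∘ T t)
    (hTnorm : ∀ t, 0 ≤ t → ∀ f, ‖T t f‖ ≤ ‖f‖) (hL : 0 ≤ L)
    (hQlip : ∀ f g, ‖Q f - Q g‖ ≤ L * ‖f - g‖) (hQ : ∀ f, ‖Q f‖ ≤ L * ‖f‖)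
    {τ r ε δ : ℝ} (hτ : 0 ≤ τ) (hr : 0 ≤ r) (hε : 0 ≤ ε) (hδ : 0 ≤ δ)
    (hstep : ∀ g, ‖T τ g - g - τ • Q g‖ ≤ ε * τ * ‖g‖) (hrem : ∀ g, ‖T r g - g‖ ≤ δ * ‖g‖)
    (k : ℕ) (f : E) :
    ‖T (r + k * τ) f - f - (r + k * τ) • Q f‖ ≤
      (δ + k * τ * ε + L * (ε + L) * (k * τ) ^ 2 + L * r) * ‖f‖ := by
  set g := (T τ)^[k] f
  have hcomp : T (r + k * τ) f = T r g := by
    rw [hsg r _ hr (by positivity), semigroup_mul_eq_iterate hT0 hsg hτ k]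
    rfl
  calc ‖T (r + k * τ) f - f - (r + k * τ) • Q f‖
      = ‖(T r g - g) + (g - f - (k * τ) • Q f) - r • Q f‖ := by
        rw [hcomp, add_smul]; congr 1; abel
    _ ≤ ‖T r g - g‖ + ‖g - f - (k * τ) • Q f‖ + ‖r • Q f‖ :=
        (norm_sub_le _ _).trans (by gcongr; exact norm_add_le _ _)
    _ ≤ δ * ‖f‖ + (k * τ * ε + L * (ε + L) * (k * τ) ^ 2) * ‖f‖ + r * (L * ‖f‖) := by
        rw [norm_smul, Real.norm_of_nonneg hr]
        gcongr
        · exact (hrem g).trans (by gcongr; exact norm_iterate_le (hTnorm τ hτ) k f)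
        · exact norm_iterate_sub_sub_smul_le (hTnorm τ hτ) hQlip hQ hstep hτ hL hε k f
        · exact hQ f
    _ = (δ + k * τ * ε + L * (ε + L) * (k * τ) ^ 2 + L * r) * ‖f‖ := by ring

theorem norm_semigroup_sub_sub_smul_le (hT0 : T 0 = id)
    (hsg : ∀ s t, 0 ≤ s → 0 ≤ t → T (s + t) = T s ∘ T t)
    (hTnorm : ∀ t, 0 ≤ t → ∀ f, ‖T t f‖ ≤ ‖f‖) (hL : 0 ≤ L)
    (hQlip : ∀ f g, ‖Q f - Q g‖ ≤ L * ‖f - g‖) (hQ : ∀ f, ‖Q f‖ ≤ L * ‖f‖)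
    {ε : ℕ → ℝ} (hε0 : ∀ m, 0 ≤ ε m) (hε : Tendsto ε atTop (𝓝 0))
    (hgen : ∀ᶠ m : ℕ in atTop, ∀ f, ‖(m : ℝ) • (T (1 / m) f - f) - Q f‖ ≤ ε m * ‖f‖)
    {δ : ℝ → ℝ} (hδ0 : ∀ r, 0 ≤ δ r) (hδ : Tendsto δ (𝓝[≥] 0) (𝓝 0))
    (hcont : ∀ᶠ r in 𝓝[≥] 0, ∀ f, ‖T r f - f‖ ≤ δ r * ‖f‖) {h : ℝ} (hh : 0 ≤ h) (f : E) :
    ‖T h f - f - h • Q f‖ ≤ L ^ 2 * h ^ 2 * ‖f‖ := by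
  set r : ℕ → ℝ := fun m => h - ⌊h * m⌋₊ * (1 / m)
  have hr_mem : ∀ᶠ m : ℕ in atTop, 0 ≤ r m ∧ r m ≤ 1 / m :=
    (eventually_gt_atTop 0).mono fun m hm => sub_floor_mul_mem_Icc hh hm
  have hr_nhds : Tendsto r atTop (𝓝 0) :=
    tendsto_of_tendsto_of_tendsto_of_le_of_le' tendsto_const_nhds
      tendsto_one_div_atTop_nhds_zero_nat (hr_mem.mono fun _ => And.left)
      (hr_mem.mono fun _ => And.right)
  have hr : Tendsto r atTop (𝓝[≥] 0) :=
    tendsto_nhdsWithin_iff.mpr ⟨hr_nhds, hr_mem.mono fun _ => And.left⟩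
  have hbound : Tendsto (fun m => (δ (r m) + h * ε m + L * (ε m + L) * h ^ 2 + L * r m) * ‖f‖)
      atTop (𝓝 (L ^ 2 * h ^ 2 * ‖f‖)) := by
    have := ((((hδ.comp hr).add (hε.const_mul h)).add
      (((hε.add_const L).const_mul L).mul_const (h ^ 2))).add (hr_nhds.const_mul L)).mul_const ‖f‖
    rwa [show (0 + h * 0 + L * (0 + L) * h ^ 2 + L * 0) * ‖f‖ = L ^ 2 * h ^ 2 * ‖f‖ by ring]
      at this
  refine ge_of_tendsto hbound ?_
  filter_upwards [hgen, hr.eventually hcont, hr_mem, eventually_gt_atTop 0]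
    with m hgen_m hcont_m hr_m hm
  have hm' : (0 : ℝ) < m := Nat.cast_pos.mpr hm
  have hstep : ∀ g, ‖T (1 / m) g - g - (1 / m : ℝ) • Q g‖ ≤ ε m * (1 / m) * ‖g‖ := fun g => by
    rw [show T (1 / m) g - g - (1 / m : ℝ) • Q g
        = (1 / m : ℝ) • ((m : ℝ) • (T (1 / m) g - g) - Q g) by
      rw [smul_sub, smul_smul, one_div_mul_cancel hm'.ne', one_smul],
      norm_smul, Real.norm_of_nonneg (by positivity)]
    calc 1 / (m : ℝ) * ‖(m : ℝ) • (T (1 / m) g - g) - Q g‖ ≤ 1 / m * (ε m * ‖g‖) := by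
          gcongr; exact hgen_m g
      _ = ε m * (1 / m) * ‖g‖ := by ring
  have hkτ : ⌊h * m⌋₊ * (1 / m : ℝ) ≤ h := by linarith [hr_m.1]
  have hsplit := norm_semigroup_add_mul_sub_le hT0 hsg hTnorm hL hQlip hQ (by positivity) hr_m.1
    (hε0 m) (hδ0 _) hstep hcont_m ⌊h * m⌋₊ f
  rw [show r m + ⌊h * m⌋₊ * (1 / m : ℝ) = h by ring] at hsplit
  exact hsplit.trans (by have := hε0 m; gcongr)

theorem norm_euler_sub_semigroup_le (hT0 : T 0 = id)
    (hsg : ∀ s t, 0 ≤ s → 0 ≤ t → T (s + t) = T s ∘ T t)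
    (hTnorm : ∀ t, 0 ≤ t → ∀ f, ‖T t f‖ ≤ ‖f‖) (hL : 0 ≤ L)
    (hQlip : ∀ f g, ‖Q f - Q g‖ ≤ L * ‖f - g‖)
    (hlocal : ∀ h, 0 ≤ h → ∀ f, ‖T h f - f - h • Q f‖ ≤ L ^ 2 * h ^ 2 * ‖f‖)
    {t : ℝ} (ht : 0 ≤ t) {n : ℕ} (hn : 0 < n) (f : E) :
    ‖(fun g => g + (t / n) • Q g)^[n] f - T t f‖ ≤
      Real.exp (t * L) * (L ^ 2 * t ^ 2) / n * ‖f‖ := by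
  set τ := t / n
  have hn' : (0 : ℝ) < n := Nat.cast_pos.mpr hn
  have hτ : 0 ≤ τ := by positivity
  have hTt : T t = (T τ)^[n] := by
    rw [← semigroup_mul_eq_iterate hT0 hsg hτ n, mul_div_cancel₀ t hn'.ne']
  have hR : ∀ f g, ‖(f + τ • Q f) - (g + τ • Q g)‖ ≤ (1 + τ * L) * ‖f - g‖ := fun f g => by
    rw [add_sub_add_comm, ← smul_sub]
    refine (norm_add_le _ _).trans ?_
    rw [norm_smul, Real.norm_of_nonneg hτ]
    nlinarith [hQlip f g]
  have hψ : ∀ g, ‖(g + τ • Q g) - T τ g‖ ≤ L ^ 2 * τ ^ 2 * ‖g‖ := fun g => by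
    rw [← norm_neg, show -(g + τ • Q g - T τ g) = T τ g - g - τ • Q g by abel]
    exact hlocal τ hτ g
  have hexp : (1 + τ * L) ^ n ≤ Real.exp (t * L) := by
    convert Real.one_sub_div_pow_le_exp_neg (n := n) (t := -(t * L)) (by nlinarith) using 2
    · simp only [τ]; ring
    · ring
  rw [hTt]
  calc ‖(fun g => g + τ • Q g)^[n] f - (T τ)^[n] f‖
      ≤ n * (1 + τ * L) ^ n * (L ^ 2 * τ ^ 2) * ‖f‖ :=
        norm_iterate_sub_iterate_le (hTnorm τ hτ) hR (by nlinarith) hψ (by positivity) n f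
    _ = (1 + τ * L) ^ n * (L ^ 2 * t ^ 2) / n * ‖f‖ := by
        simp only [τ]; field_simp
    _ ≤ Real.exp (t * L) * (L ^ 2 * t ^ 2) / n * ‖f‖ := by gcongr

end Semigroup

theorem stmt_18_general {X : Type*} [TopologicalSpace X]
    (T : ℝ → Op X)
    (hT : ∀ t : ℝ, 0 ≤ t → IsSublinearTransition (T t))
    (hT0 : T 0 = id)
    (hTsg : ∀ s t : ℝ, 0 ≤ s → 0 ≤ t → T (s + t) = T s ∘ T t)
    (hUC : IsUniformlyContinuousSG T)
    (Q : Op X)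
    (hQdef : Tendsto (fun n : ℕ => opDist ((n : ℝ) • (T (1 / n) - id)) Q) atTop (nhds 0)) :
    (IsSublinearRate Q ∧ opSemiNorm Q ≠ ⊤) ∧
    ∀ t : ℝ, 0 ≤ t →
      Tendsto (fun n => opSemiNorm (euler Q t n - T t)) atTop (nhds 0) := by
  have hQ : IsSublinearRate Q := IsSublinearRate.of_tendsto
    (fun n => (hT _ (by positivity)).isSublinearRate_smul_sub_id n.cast_nonneg)
    (tendsto_apply_of_tendsto_opDist hQdef)
  have hQtop : opSemiNorm Q ≠ ⊤ := opSemiNorm_ne_top_of_tendsto_opDist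
    (fun n => (hT _ (by positivity)).opSemiNorm_smul_sub_id_ne_top _) hQdef
  set L := (opSemiNorm Q).toReal
  have hQbnd : ∀ f, ‖Q f‖ ≤ L * ‖f‖ := norm_apply_le_toReal_mul hQtop hQ.map_zero
  have hQlip := hQ.norm_map_sub_map_le toReal_nonneg hQbnd
  have hTnorm : ∀ t, 0 ≤ t → ∀ f, ‖T t f‖ ≤ ‖f‖ := fun t ht => (hT t ht).norm_map_le
  obtain ⟨ε, hε0, hε, hgen⟩ := exists_bound_of_tendsto_opSemiNorm
    (tendsto_opSemiNorm_sub_of_tendsto_opDist hQdef)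
    (Eventually.of_forall fun n => by
      simp [(hT (n : ℝ)⁻¹ (by positivity)).map_zero, hQ.map_zero])
  obtain ⟨δ, hδ0, hδ, hcont⟩ := exists_bound_of_tendsto_opSemiNorm (B := fun r => T r - id)
    (by simpa [hT0] using hUC 0 le_rfl)
    (eventually_nhdsWithin_of_forall fun r hr => by simp [(hT r hr).map_zero])
  have hlocal := fun h (hh : 0 ≤ h) => norm_semigroup_sub_sub_smul_le hT0 hTsg hTnorm toReal_nonneg
    hQlip hQbnd hε0 hε hgen hδ0 hδ hcont hh
  refine ⟨⟨hQ, hQtop⟩, fun t ht => tendsto_opSemiNorm_of_bound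
    (tendsto_const_div_atTop_nhds_zero_nat (Real.exp (t * L) * (L ^ 2 * t ^ 2))) ?_⟩
  filter_upwards [eventually_gt_atTop 0] with n hn f
  exact norm_euler_sub_semigroup_le hT0 hTsg hTnorm toReal_nonneg hQlip hlocal ht hn f

theorem stmt_18 {X : Type*} [Countable X] [TopologicalSpace X] [DiscreteTopology X]
    (T : ℝ → Op X)
    (hT : ∀ t : ℝ, 0 ≤ t → IsSublinearTransition (T t))
    (hT0 : T 0 = id)
    (hTsg : ∀ s t : ℝ, 0 ≤ s → 0 ≤ t → T (s + t) = T s ∘ T t)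
    (hUC : IsUniformlyContinuousSG T)
    (Q : Op X)
    (hQdef : Tendsto (fun n : ℕ => opDist ((n : ℝ) • (T (1 / n) - id)) Q) atTop (nhds 0)) :
    (IsSublinearRate Q ∧ opSemiNorm Q ≠ ⊤) ∧
    ∀ t : ℝ, 0 ≤ t →
      Tendsto (fun n => opSemiNorm (euler Q t n - T t)) atTop (nhds 0) :=
  stmt_18_general T hT hT0 hTsg hUC Q hQdef
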